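/- arXiv:1601.01210 — 2 statements merged into one kernel-verified Lean document; each statement's English description precedes it below -/
import Mathlib

section
/- The Nagata automorphism F of K^3 defined by F_1 = X_1 - 2pX_2 - p^2 X_3, F_2 = X_2 + pX_3, F_3 = X_3, where p = X_1 X_3 + X_2^2, is nice; more precisely P_3^1 = 0 and P_2^2 = 0 for the associated sequences. -/
open MvPolynomial Finset

noncomputable def seqP {K : Type*} [Field K] {n : ℕ}
    (F : Fin n → MvPolynomial (Fin n) K) : ℕ → Fin n → MvPolynomial (Fin n) K
  | 0 => fun i => X i
  | k + 1 => fun i => bind₁ F (seqP F k i) - seqP F k i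

/-- The quadratic form `p = X₁X₃ + X₂²` of the Nagata automorphism. -/
noncomputable def nagataP (K : Type*) [Field K] : MvPolynomial (Fin 3) K :=
  X 0 * X 2 + X 1 ^ 2

/-- The Nagata automorphism `(X₁ - 2pX₂ - p²X₃, X₂ + pX₃, X₃)`. -/
noncomputable def nagata (K : Type*) [Field K] : Fin 3 → MvPolynomial (Fin 3) K :=
  ![X 0 - 2 * nagataP K * X 1 - nagataP K ^ 2 * X 2,
    X 1 + nagataP K * X 2,
    X 2]

/-! Since `p` and `X₃` are fixed by `F`, the sequence of a coordinate stops one step after its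
term lies in `K[p, X₃]`; in the 0-based indexing of the code, `P_1^2 = 0`, `P_1^1 = p X₃` and
`P_2^0 = -2 p² X₃`. -/

section seqP

variable {K : Type*} [Field K] {n : ℕ} (F : Fin n → MvPolynomial (Fin n) K)

theorem seqP_succ (k : ℕ) (i : Fin n) :
    seqP F (k + 1) i = bind₁ F (seqP F k i) - seqP F k i :=
  rfl

theorem seqP_succ_eq_zero_iff {k : ℕ} {i : Fin n} :
    seqP F (k + 1) i = 0 ↔ bind₁ F (seqP F k i) = seqP F k i :=
  sub_eq_zero

theorem seqP_eq_zero_of_le {k m : ℕ} {i : Fin n} (h : seqP F k i = 0) (hkm : k ≤ m) :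
    seqP F m i = 0 := by
  induction hkm with
  | refl => exact h
  | step _ ih => rw [seqP_succ, ih, map_zero, sub_zero]

end seqP

section Nagata

variable {K : Type*} [Field K]

theorem nagata_zero : nagata K 0 = X 0 - 2 * nagataP K * X 1 - nagataP K ^ 2 * X 2 :=
  rfl

theorem nagata_one : nagata K 1 = X 1 + nagataP K * X 2 :=
  rfl

theorem nagata_two : nagata K 2 = X 2 :=
  rfl

theorem bind₁_nagata_nagataP : bind₁ (nagata K) (nagataP K) = nagataP K := by
  simp only [nagataP, map_add, map_mul, map_pow, bind₁_X_right, nagata_zero, nagata_one,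
    nagata_two]
  ring

theorem seqP_nagata_one_zero :
    seqP (nagata K) 1 0 = -2 * nagataP K * X 1 - nagataP K ^ 2 * X 2 := by
  rw [seqP_succ]
  simp only [seqP, bind₁_X_right, nagata_zero]
  ring

theorem seqP_nagata_one_one : seqP (nagata K) 1 1 = nagataP K * X 2 := by
  rw [seqP_succ]
  simp only [seqP, bind₁_X_right, nagata_one]
  ring

theorem seqP_nagata_one_two : seqP (nagata K) 1 2 = 0 :=
  seqP_succ_eq_zero_iff _ |>.mpr (bind₁_X_right _ _)

theorem seqP_nagata_two_zero : seqP (nagata K) 2 0 = -2 * nagataP K ^ 2 * X 2 := by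
  rw [seqP_succ, seqP_nagata_one_zero]
  simp only [map_sub, map_mul, map_pow, map_neg, map_ofNat, bind₁_X_right, bind₁_nagata_nagataP,
    nagata_one, nagata_two]
  ring

theorem seqP_nagata_two_one : seqP (nagata K) 2 1 = 0 := by
  rw [seqP_succ_eq_zero_iff, seqP_nagata_one_one, map_mul, bind₁_nagata_nagataP, bind₁_X_right,
    nagata_two]

theorem seqP_nagata_three_zero : seqP (nagata K) 3 0 = 0 := by
  rw [seqP_succ_eq_zero_iff, seqP_nagata_two_zero]
  simp only [map_mul, map_neg, map_pow, map_ofNat, bind₁_nagata_nagataP, bind₁_X_right, nagata_two]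

end Nagata

theorem stmt5_general {K : Type*} [Field K] :
    seqP (nagata K) 3 0 = 0 ∧ seqP (nagata K) 2 1 = 0 ∧
      ∃ m, ∀ i, seqP (nagata K) m i = 0 := by
  refine ⟨seqP_nagata_three_zero, seqP_nagata_two_one, 3, fun i => ?_⟩
  fin_cases i
  · exact seqP_nagata_three_zero
  · exact seqP_eq_zero_of_le _ seqP_nagata_two_one (by norm_num)
  · exact seqP_eq_zero_of_le _ seqP_nagata_one_two (by norm_num)

/-- The Nagata automorphism is nice: `P_3^1 = 0`, `P_2^2 = 0`. -/
theorem stmt5 {K : Type*} [Field K] [CharZero K] :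
    seqP (nagata K) 3 0 = 0 ∧ seqP (nagata K) 2 1 = 0 ∧
      ∃ m, ∀ i, seqP (nagata K) m i = 0 :=
  stmt5_general
end

section
/- Let H = (L_1^3,...,L_n^3) with L_i = Σ_j a_{ij}X_j linear forms over a field K of characteristic 0. If (JH)^3 = 0, then Σ_{j,k} a_{ij}a_{jk}a_{kl} L_j^2 L_k^2 = 0 for all i, l = 1,...,n. -/
/-!
The Jacobian of `H = (L_1³, …, L_n³)` factors as `JH = D · A` with `D = diag(3 L_i²)` and
`A = (a_{ij})`, so the `(i, l)` entry of `(JH)³ = DA · DA · DA` is `3 L_i²` times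
`9 ∑_{j,k} a_{ij} a_{jk} a_{kl} L_j² L_k²`. In the domain `K[X]` with `3 ≠ 0` the second factor
vanishes unless `L_i = 0`, and then the whole row `a_{i·}` is zero, so the sum vanishes anyway.
-/

open MvPolynomial Finset

section LinearForm

variable {R σ : Type*} [CommSemiring R] [Fintype σ] [DecidableEq σ]

theorem pderiv_sum_C_mul_X (a : σ → R) (q : σ) : pderiv q (∑ j, C (a j) * X j) = C (a q) := by
  simp [pderiv_X, Pi.single_apply]

theorem eq_zero_of_sum_C_mul_X_eq_zero {a : σ → R} (h : ∑ j, C (a j) * X j = 0) (q : σ) :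
    a q = 0 := by
  have h' := congrArg (pderiv q) h
  rwa [pderiv_sum_C_mul_X, map_zero, C_eq_zero] at h'

theorem jacobian_pow_three_eq_diagonal_mul (a : Matrix σ σ R) {L : σ → MvPolynomial σ R}
    (hL : ∀ i, L i = ∑ j, C (a i j) * X j) :
    Matrix.of (fun i j => pderiv j (L i ^ 3)) =
      Matrix.diagonal (fun i => 3 * L i ^ 2) * a.map C := by
  ext i j
  have hd : pderiv j (L i) = C (a i j) := by rw [hL]; exact pderiv_sum_C_mul_X _ _
  rw [Matrix.of_apply, pderiv_pow, hd, Matrix.diagonal_mul, Matrix.map_apply]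
  norm_num

end LinearForm

theorem Matrix.diagonal_mul_cube_apply {n α : Type*} [CommSemiring α] [Fintype n] [DecidableEq n]
    (d : n → α) (M : Matrix n n α) (i l : n) :
    (Matrix.diagonal d * M * (Matrix.diagonal d * M) * (Matrix.diagonal d * M)) i l =
      d i * ∑ j, ∑ k, M i j * d j * M j k * d k * M k l := by
  have hDM : Matrix.diagonal d * M = Matrix.of fun j k => d j * M j k := by
    ext; exact Matrix.diagonal_mul ..
  simp only [hDM, Matrix.mul_apply, Matrix.of_apply, sum_mul, mul_sum]
  rw [sum_comm]
  refine sum_congr rfl fun j _ => sum_congr rfl fun k _ => ?_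
  ring

/-- For `H = (L_1³,…,L_n³)` with `L_i = ∑_j a_{ij}X_j`, if `(JH)³ = 0` then
`∑_{j,k} a_{ij}a_{jk}a_{kl}L_j²L_k² = 0` for all `i, l`. -/
theorem stmt17 {K : Type*} [Field K] [CharZero K] {n : ℕ}
    (a : Matrix (Fin n) (Fin n) K)
    (L : Fin n → MvPolynomial (Fin n) K)
    (hL : ∀ i, L i = ∑ j, C (a i j) * X j)
    (H : Fin n → MvPolynomial (Fin n) K)
    (hH : ∀ i, H i = L i ^ 3)
    (hJ : (Matrix.of fun i j => pderiv j (H i)) *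
          (Matrix.of fun i j => pderiv j (H i)) *
          (Matrix.of fun i j => pderiv j (H i)) = 0) :
    ∀ i l, ∑ j, ∑ k, C (a i j * a j k * a k l) * L j ^ 2 * L k ^ 2 = 0 := by
  intro i l
  obtain rfl : H = fun i => L i ^ 3 := funext hH
  have hil := congrFun (congrFun hJ i) l
  rw [jacobian_pow_three_eq_diagonal_mul a hL, Matrix.diagonal_mul_cube_apply] at hil
  by_cases hLi : L i = 0
  · have hrow := eq_zero_of_sum_C_mul_X_eq_zero ((hL i).symm.trans hLi)
    simp [hrow]
  have hsum : ∑ j, ∑ k, C (a i j) * (3 * L j ^ 2) * C (a j k) * (3 * L k ^ 2) * C (a k l) =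
      9 * ∑ j, ∑ k, C (a i j * a j k * a k l) * L j ^ 2 * L k ^ 2 := by
    simp only [mul_sum, map_mul]
    exact sum_congr rfl fun j _ => sum_congr rfl fun k _ => by ring
  simp only [Matrix.map_apply, Matrix.zero_apply] at hil
  rw [hsum] at hil
  simpa [hLi] using hil
end
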